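/- Let M > 0 and k ∈ (−1,1). For R̃ > 0 let the almost-sphere AS(R̃) be the set of points (u,v) with u = (√2M/(1+k))^{1/4}·√R̃·cos ψ and v = (√2M/(1−k))^{1/4}·√R̃·sin ψ for some ψ ∈ [0,π/2]. There exist constants C̲₁, C̲₂, C̄₁, C̄₂ depending only on M and k, and for every δ > 0 a threshold T₀, such that for every R̃ ≥ T₀, every (u,v) ∈ AS(R̃), and every η ∈ [0,π/2] satisfying the unparametrized geodesic relation for (u,v), the number R = S_η(u,v) satisfies R + C̲₁·log R + C̲₂ ≤ R̃ ≤ (1+δ)·R + C̄₁·log R + C̄₂. -/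

import Mathlib

/-!
Put `U = √(1+k) u / cos η = sinh α` and `V = √(1-k) v / sin η = sinh β`; the geodesic relation
says `α / √(1+k) = β / √(1-k) =: t`. Since `x √(1 + x²) = x² + O(1)` for `x ≥ 0`, the distance is
`R = (√(2√2/M) / 2) (√(1+k) u² + √(1-k) v² + t) + O(1)`, and on `AS(R̃)` the quadratic part is
exactly `R̃`. Hence `R̃ ≤ R ≤ R̃ + O(t) + O(1)`. Finally `t = O(log R̃)`: whichever of `cos² η`,
`sin² η` is at least `1/2` bounds `U` or `V` by `O(√R̃)`, and `arsinh` grows logarithmically.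
-/

open Real

/-- The separated distance function `S_η` of the generalized Taub-NUT polytope metric,
in adapted quadratic coordinates; it equals the Riemannian distance from the origin to
`(u,v)` when `(u,v)` lies on the geodesic of initial angle `η`. -/
noncomputable def Sdist (M k η : ℝ) (u v : ℝ) : ℝ :=
  let U := Real.sqrt (1 + k) * u / Real.cos η
  let V := Real.sqrt (1 - k) * v / Real.sin η
  Real.sqrt (2 * Real.sqrt 2 / M) *
    ((Real.cos η ^ 2 / (2 * Real.sqrt (1 + k))) *
        (U * Real.sqrt (1 + U ^ 2) + Real.log (U + Real.sqrt (1 + U ^ 2))) +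
     (Real.sin η ^ 2 / (2 * Real.sqrt (1 - k))) *
        (V * Real.sqrt (1 + V ^ 2) + Real.log (V + Real.sqrt (1 + V ^ 2))))

open Classical in
/-- The unparametrized geodesic relation: `(u,v)` lies on the geodesic from the origin
with initial angle `η` (interpreted as `v = 0` when `η = 0` and `u = 0` when `η = π/2`). -/
noncomputable def GeodRel (k η u v : ℝ) : Prop :=
  if η = 0 then v = 0
  else if η = Real.pi / 2 then u = 0
  else
    let U := Real.sqrt (1 + k) * u / Real.cos η
    let V := Real.sqrt (1 - k) * v / Real.sin η
    (U + Real.sqrt (1 + U ^ 2)) ^ (1 / Real.sqrt (1 + k))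
      = (V + Real.sqrt (1 + V ^ 2)) ^ (1 / Real.sqrt (1 - k))

open Set

lemma cos_nonneg_of_mem_Icc_zero_pi_div_two {x : ℝ} (hx : x ∈ Icc 0 (π / 2)) : 0 ≤ cos x :=
  cos_nonneg_of_mem_Icc ⟨by linarith [hx.1, pi_pos], hx.2⟩

lemma sin_nonneg_of_mem_Icc_zero_pi_div_two {x : ℝ} (hx : x ∈ Icc 0 (π / 2)) : 0 ≤ sin x :=
  sin_nonneg_of_nonneg_of_le_pi hx.1 (by linarith [hx.2, pi_pos])

lemma sq_le_mul_sqrt_one_add_sq {x : ℝ} (hx : 0 ≤ x) : x ^ 2 ≤ x * √(1 + x ^ 2) := by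
  have : x ≤ √(1 + x ^ 2) := le_sqrt_of_sq_le (by linarith)
  nlinarith

lemma mul_sqrt_one_add_sq_le (x : ℝ) : x * √(1 + x ^ 2) ≤ x ^ 2 + 1 / 2 := by
  have := sq_sqrt (show 0 ≤ 1 + x ^ 2 by positivity)
  nlinarith [sq_nonneg (x - √(1 + x ^ 2))]

lemma arsinh_le_log_one_add_two_mul {x : ℝ} (hx : 0 ≤ x) : arsinh x ≤ log (1 + 2 * x) := by
  have : √(1 + x ^ 2) ≤ 1 + x := (sqrt_le_left (by linarith)).mpr (by nlinarith)
  exact log_le_log (by positivity) (by linarith)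

lemma arsinh_le_of_sq_le_mul {x C R : ℝ} (hx : 0 ≤ x) (hR : 1 ≤ R) (h : x ^ 2 ≤ C * R) :
    arsinh x ≤ log (1 + 2 * √C) + log R := by
  have hC : 0 ≤ C := nonneg_of_mul_nonneg_left (by nlinarith) (by linarith : (0 : ℝ) < R)
  have hxR : x ≤ √C * R :=
    calc x ≤ √(C * R) := le_sqrt_of_sq_le h
      _ = √C * √R := sqrt_mul hC R
      _ ≤ √C * R := mul_le_mul_of_nonneg_left (sqrt_le_self_iff.mpr (Or.inr hR)) (sqrt_nonneg C)
  calc arsinh x ≤ log (1 + 2 * x) := arsinh_le_log_one_add_two_mul hx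
    _ ≤ log ((1 + 2 * √C) * R) := log_le_log (by positivity) (by nlinarith [sqrt_nonneg C])
    _ = log (1 + 2 * √C) + log R := log_mul (by positivity) (by positivity)

lemma le_div_of_arsinh_eq_mul {w a t U C R : ℝ} (ha : 0 < a) (hR : 1 ≤ R) (hU : 0 ≤ U)
    (hw : 1 / 2 ≤ w) (hUC : w * U ^ 2 ≤ C * R) (hUt : w * arsinh U = w * (a * t)) :
    t ≤ (log (1 + 2 * √(2 * C)) + log R) / a := by
  rw [le_div_iff₀ ha, mul_comm, ← mul_left_cancel₀ (by positivity) hUt]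
  refine arsinh_le_of_sq_le_mul hU hR ?_
  nlinarith [mul_nonneg (by linarith : 0 ≤ 2 * w - 1) (sq_nonneg U)]

lemma weighted_mul_sqrt_add_arsinh_bounds {a b U V c s t : ℝ} (ha : 0 < a) (hb : 0 < b)
    (hU : 0 ≤ U) (hV : 0 ≤ V) (hcs : c ^ 2 + s ^ 2 = 1)
    (hUt : c ^ 2 * arsinh U = c ^ 2 * (a * t)) (hVt : s ^ 2 * arsinh V = s ^ 2 * (b * t)) :
    let W := c ^ 2 / (2 * a) * (U * √(1 + U ^ 2) + arsinh U) +
      s ^ 2 / (2 * b) * (V * √(1 + V ^ 2) + arsinh V)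
    let Q := (c ^ 2 * U ^ 2 / a + s ^ 2 * V ^ 2 / b + t) / 2
    Q ≤ W ∧ W ≤ Q + (1 / a + 1 / b) / 4 := by
  intro W Q
  -- `x √(1 + x²) = x² + e` with `0 ≤ e ≤ 1/2`; `arsinh` contributes exactly `t / 2`.
  have hW : W = Q + (c ^ 2 * (U * √(1 + U ^ 2) - U ^ 2) / a +
      s ^ 2 * (V * √(1 + V ^ 2) - V ^ 2) / b) / 2 := by
    simp only [W, Q]
    field_simp
    linear_combination b * hUt + a * hVt + (a * b * t) * hcs
  have err_bounds : ∀ {w d x : ℝ}, 0 ≤ w → w ≤ 1 → 0 < d → 0 ≤ x →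
      0 ≤ w * (x * √(1 + x ^ 2) - x ^ 2) / d ∧ w * (x * √(1 + x ^ 2) - x ^ 2) / d ≤ 1 / (2 * d) := by
    intro w d x hw0 hw1 hd hx
    have he0 : 0 ≤ x * √(1 + x ^ 2) - x ^ 2 := by linarith [sq_le_mul_sqrt_one_add_sq hx]
    have he1 : w * (x * √(1 + x ^ 2) - x ^ 2) ≤ 1 / 2 := by
      nlinarith [mul_sqrt_one_add_sq_le x, mul_le_mul_of_nonneg_right hw1 he0]
    refine ⟨by positivity, ?_⟩
    rw [div_le_div_iff₀ hd (by positivity)]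
    nlinarith
  obtain ⟨hEU0, hEU⟩ := err_bounds (sq_nonneg c) (by nlinarith [sq_nonneg s]) ha hU
  obtain ⟨hEV0, hEV⟩ := err_bounds (sq_nonneg s) (by nlinarith [sq_nonneg c]) hb hV
  constructor
  · linarith
  · have : 1 / (2 * a) + 1 / (2 * b) = (1 / a + 1 / b) / 2 := by ring
    linarith

lemma sq_mul_div_sq_of_imp {G₀ : Type*} [CommGroupWithZero G₀] {c x : G₀} (h : c = 0 → x = 0) :
    c ^ 2 * (x / c) ^ 2 = x ^ 2 := by
  rw [← mul_pow, mul_div_cancel_of_imp' h]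

namespace GeodRel

variable {k η u v : ℝ}

lemma eq_zero_of_cos_eq_zero (h : GeodRel k η u v) (hη : η ∈ Icc 0 (π / 2))
    (hcos : cos η = 0) : u = 0 := by
  have hηπ : η = π / 2 := by
    by_contra hne
    exact (cos_pos_of_mem_Ioo ⟨by linarith [hη.1, pi_pos], lt_of_le_of_ne hη.2 hne⟩).ne' hcos
  have h0 : η ≠ 0 := by rintro rfl; simp at hcos
  simpa [GeodRel, h0, hηπ] using h

lemma eq_zero_of_sin_eq_zero (h : GeodRel k η u v) (hη : η ∈ Icc 0 (π / 2))
    (hsin : sin η = 0) : v = 0 := by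
  have hη0 : η = 0 := by
    by_contra hne
    exact (sin_pos_of_pos_of_lt_pi (lt_of_le_of_ne hη.1 (Ne.symm hne))
      (by linarith [hη.2, pi_pos])).ne' hsin
  simpa [GeodRel, hη0] using h

lemma exists_param (h : GeodRel k η u v) (hk : k ∈ Ioo (-1) 1) (hη : η ∈ Icc 0 (π / 2))
    (hu : 0 ≤ u) (hv : 0 ≤ v) :
    ∃ t, 0 ≤ t ∧
      cos η ^ 2 * arsinh (√(1 + k) * u / cos η) = cos η ^ 2 * (√(1 + k) * t) ∧
      sin η ^ 2 * arsinh (√(1 - k) * v / sin η) = sin η ^ 2 * (√(1 - k) * t) := by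
  have ha : 0 < √(1 + k) := sqrt_pos.mpr (by linarith [hk.1])
  have hb : 0 < √(1 - k) := sqrt_pos.mpr (by linarith [hk.2])
  have hcos0 : 0 ≤ cos η := cos_nonneg_of_mem_Icc_zero_pi_div_two hη
  have hsin0 : 0 ≤ sin η := sin_nonneg_of_mem_Icc_zero_pi_div_two hη
  have hU : 0 ≤ arsinh (√(1 + k) * u / cos η) := arsinh_nonneg_iff.mpr (by positivity)
  have hV : 0 ≤ arsinh (√(1 - k) * v / sin η) := arsinh_nonneg_iff.mpr (by positivity)
  by_cases hcos : cos η = 0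
  · exact ⟨arsinh (√(1 - k) * v / sin η) / √(1 - k), by positivity, by simp [hcos], by field_simp⟩
  refine ⟨arsinh (√(1 + k) * u / cos η) / √(1 + k), by positivity, by field_simp, ?_⟩
  by_cases hsin : sin η = 0
  · simp [hsin]
  have h0 : η ≠ 0 := by rintro rfl; simp at hsin
  have hπ : η ≠ π / 2 := by rintro rfl; simp at hcos
  -- `(x + √(1 + x²)) ^ p = exp (p · arsinh x)`, so the relation says `arsinh U / a = arsinh V / b`.
  simp only [GeodRel, if_neg h0, if_neg hπ] at h
  rw [← exp_arsinh, ← exp_arsinh, ← exp_mul, ← exp_mul, exp_eq_exp] at h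
  field_simp at h ⊢
  linarith

end GeodRel

section GeodesicParameter

variable {k η u v t : ℝ}

lemma Sdist_bounds_of_param (M : ℝ) (hk : k ∈ Ioo (-1) 1) (hη : η ∈ Icc 0 (π / 2))
    (hu : 0 ≤ u) (hv : 0 ≤ v) (hcos : cos η = 0 → u = 0) (hsin : sin η = 0 → v = 0)
    (hUt : cos η ^ 2 * arsinh (√(1 + k) * u / cos η) = cos η ^ 2 * (√(1 + k) * t))
    (hVt : sin η ^ 2 * arsinh (√(1 - k) * v / sin η) = sin η ^ 2 * (√(1 - k) * t)) :
    let q := √(2 * √2 / M)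
    let P := (√(1 + k) * u ^ 2 + √(1 - k) * v ^ 2 + t) / 2
    q * P ≤ Sdist M k η u v ∧
      Sdist M k η u v ≤ q * P + q * ((1 / √(1 + k) + 1 / √(1 - k)) / 4) := by
  intro q P
  have ha : 0 < √(1 + k) := sqrt_pos.mpr (by linarith [hk.1])
  have hb : 0 < √(1 - k) := sqrt_pos.mpr (by linarith [hk.2])
  have hcos0 : 0 ≤ cos η := cos_nonneg_of_mem_Icc_zero_pi_div_two hη
  have hsin0 : 0 ≤ sin η := sin_nonneg_of_mem_Icc_zero_pi_div_two hη
  obtain ⟨hlo, hhi⟩ := weighted_mul_sqrt_add_arsinh_bounds ha hb (by positivity) (by positivity)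
    (cos_sq_add_sin_sq η) hUt hVt
  have hU : cos η ^ 2 * (√(1 + k) * u / cos η) ^ 2 / √(1 + k) = √(1 + k) * u ^ 2 := by
    rw [sq_mul_div_sq_of_imp (by simp +contextual [hcos])]
    field_simp
  have hV : sin η ^ 2 * (√(1 - k) * v / sin η) ^ 2 / √(1 - k) = √(1 - k) * v ^ 2 := by
    rw [sq_mul_div_sq_of_imp (by simp +contextual [hsin])]
    field_simp
  rw [hU, hV] at hlo hhi
  have hq : 0 ≤ q := sqrt_nonneg _
  exact ⟨mul_le_mul_of_nonneg_left hlo hq, (mul_le_mul_of_nonneg_left hhi hq).trans_eq (mul_add _ _ _)⟩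

lemma param_le_of_le_mul {c R : ℝ} (hk : k ∈ Ioo (-1) 1) (hη : η ∈ Icc 0 (π / 2))
    (hu : 0 ≤ u) (hv : 0 ≤ v) (hcos : cos η = 0 → u = 0) (hsin : sin η = 0 → v = 0)
    (hUt : cos η ^ 2 * arsinh (√(1 + k) * u / cos η) = cos η ^ 2 * (√(1 + k) * t))
    (hVt : sin η ^ 2 * arsinh (√(1 - k) * v / sin η) = sin η ^ 2 * (√(1 - k) * t))
    (hR : 1 ≤ R) (huv : √(1 + k) * u ^ 2 + √(1 - k) * v ^ 2 ≤ c * R) :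
    t ≤ (log (1 + 2 * √(2 * (√(1 + k) * c))) + log R) / √(1 + k) +
      (log (1 + 2 * √(2 * (√(1 - k) * c))) + log R) / √(1 - k) := by
  have ha : 0 < √(1 + k) := sqrt_pos.mpr (by linarith [hk.1])
  have hb : 0 < √(1 - k) := sqrt_pos.mpr (by linarith [hk.2])
  have hcos0 : 0 ≤ cos η := cos_nonneg_of_mem_Icc_zero_pi_div_two hη
  have hsin0 : 0 ≤ sin η := sin_nonneg_of_mem_Icc_zero_pi_div_two hη
  have hlog : ∀ C, 0 ≤ log (1 + 2 * √C) + log R := fun C =>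
    add_nonneg (log_nonneg (by linarith [sqrt_nonneg C])) (log_nonneg hR)
  -- Whichever of `cos² η`, `sin² η` is at least `1/2` controls `t`.
  rcases le_total (1 / 2) (cos η ^ 2) with hc | hs
  · have hUC : cos η ^ 2 * (√(1 + k) * u / cos η) ^ 2 ≤ √(1 + k) * c * R := by
      rw [sq_mul_div_sq_of_imp (by simp +contextual [hcos])]
      nlinarith [mul_nonneg hb.le (sq_nonneg v)]
    have := le_div_of_arsinh_eq_mul ha hR (by positivity) hc hUC hUt
    have := div_nonneg (hlog (2 * (√(1 - k) * c))) hb.le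
    linarith
  · have hs : 1 / 2 ≤ sin η ^ 2 := by linarith [cos_sq_add_sin_sq η]
    have hVC : sin η ^ 2 * (√(1 - k) * v / sin η) ^ 2 ≤ √(1 - k) * c * R := by
      rw [sq_mul_div_sq_of_imp (by simp +contextual [hsin])]
      nlinarith [mul_nonneg ha.le (sq_nonneg u)]
    have := le_div_of_arsinh_eq_mul hb hR (by positivity) hs hVC hVt
    have := div_nonneg (hlog (2 * (√(1 + k) * c))) ha.le
    linarith

noncomputable def almostSphereLogCoeff (M k : ℝ) : ℝ :=
  √(2 * √2 / M) / 2 * (1 / √(1 + k) + 1 / √(1 - k))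

noncomputable def almostSphereConst (M k : ℝ) : ℝ :=
  √(2 * √2 / M) / 2 * (log (1 + 2 * √(2 * (√(1 + k) * √(√2 * M)))) / √(1 + k) +
      log (1 + 2 * √(2 * (√(1 - k) * √(√2 * M)))) / √(1 - k)) +
    √(2 * √2 / M) * ((1 / √(1 + k) + 1 / √(1 - k)) / 4)

lemma almostSphereLogCoeff_nonneg (M k : ℝ) : 0 ≤ almostSphereLogCoeff M k := by
  unfold almostSphereLogCoeff
  positivity

lemma sqrt_two_mul_sqrt_div_mul_sqrt {M : ℝ} (hM : 0 < M) : √(2 * √2 / M) * √(√2 * M) = 2 := by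
  have h : 2 * √2 / M * (√2 * M) = 2 ^ 2 := by
    field_simp
    linear_combination sq_sqrt (zero_le_two : (0 : ℝ) ≤ 2)
  rw [← sqrt_mul (by positivity), h, sqrt_sq zero_le_two]

lemma Sdist_bounds_of_geodRel {M R : ℝ} (hM : 0 < M) (hk : k ∈ Ioo (-1) 1)
    (hη : η ∈ Icc 0 (π / 2)) (hu : 0 ≤ u) (hv : 0 ≤ v) (hR : 1 ≤ R)
    (huv : √(1 + k) * u ^ 2 + √(1 - k) * v ^ 2 = √(√2 * M) * R) (h : GeodRel k η u v) :
    R ≤ Sdist M k η u v ∧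
      Sdist M k η u v ≤ R + almostSphereLogCoeff M k * log R + almostSphereConst M k := by
  obtain ⟨t, ht, hUt, hVt⟩ := h.exists_param hk hη hu hv
  have hcos := h.eq_zero_of_cos_eq_zero hη
  have hsin := h.eq_zero_of_sin_eq_zero hη
  obtain ⟨hlo, hhi⟩ := Sdist_bounds_of_param M hk hη hu hv hcos hsin hUt hVt
  have htR := param_le_of_le_mul hk hη hu hv hcos hsin hUt hVt hR huv.le
  have hRt : √(2 * √2 / M) * ((√(1 + k) * u ^ 2 + √(1 - k) * v ^ 2 + t) / 2) =
      R + √(2 * √2 / M) / 2 * t := by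
    rw [huv]
    linear_combination (R / 2) * sqrt_two_mul_sqrt_div_mul_sqrt hM
  have : 0 ≤ √(2 * √2 / M) / 2 * t := by positivity
  refine ⟨by linarith, hhi.trans ?_⟩
  rw [hRt]
  calc _ ≤ R + √(2 * √2 / M) / 2 *
          ((log (1 + 2 * √(2 * (√(1 + k) * √(√2 * M)))) + log R) / √(1 + k) +
            (log (1 + 2 * √(2 * (√(1 - k) * √(√2 * M)))) + log R) / √(1 - k)) +
          √(2 * √2 / M) * ((1 / √(1 + k) + 1 / √(1 - k)) / 4) := by
        gcongr
    _ = _ := by unfold almostSphereLogCoeff almostSphereConst; ring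

end GeodesicParameter

lemma almostSphere_coords {M k Rt ψ u v : ℝ} (hM : 0 < M) (hk : k ∈ Ioo (-1) 1) (hRt : 0 ≤ Rt)
    (hψ : ψ ∈ Icc 0 (π / 2))
    (hu : u = (√2 * M / (1 + k)) ^ ((1 : ℝ) / 4) * √Rt * cos ψ)
    (hv : v = (√2 * M / (1 - k)) ^ ((1 : ℝ) / 4) * √Rt * sin ψ) :
    0 ≤ u ∧ 0 ≤ v ∧ √(1 + k) * u ^ 2 + √(1 - k) * v ^ 2 = √(√2 * M) * Rt := by
  have hquarter : ∀ {s : ℝ}, 0 < s →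
      ((√2 * M / s) ^ ((1 : ℝ) / 4)) ^ 2 = √(√2 * M) / √s := fun hs => by
    rw [← rpow_natCast, ← rpow_mul (div_pos (by positivity) hs).le, ← sqrt_div' _ hs.le,
      sqrt_eq_rpow (√2 * M / _)]
    norm_num
  have h1k : 0 < 1 + k := by linarith [hk.1]
  have h1k' : 0 < 1 - k := by linarith [hk.2]
  have hcos : 0 ≤ cos ψ := cos_nonneg_of_mem_Icc_zero_pi_div_two hψ
  have hsin : 0 ≤ sin ψ := sin_nonneg_of_mem_Icc_zero_pi_div_two hψ
  have ha : 0 < √(1 + k) := sqrt_pos.mpr h1k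
  have hb : 0 < √(1 - k) := sqrt_pos.mpr h1k'
  refine ⟨hu ▸ by positivity, hv ▸ by positivity, ?_⟩
  rw [hu, hv, mul_pow, mul_pow, mul_pow, mul_pow, hquarter h1k, hquarter h1k', sq_sqrt hRt]
  field_simp
  linear_combination Rt * cos_sq_add_sin_sq ψ

/-- Almost-spheres: points of the locus `AS(R̃)` lie at Riemannian distance `R` from the
origin with `R + C̲₁ log R + C̲₂ ≤ R̃ ≤ (1+δ) R + C̄₁ log R + C̄₂`. -/
theorem stmt_7 (M k : ℝ) (hM : 0 < M) (hk : k ∈ Set.Ioo (-1 : ℝ) 1) :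
    ∃ C₁ C₂ C₃ C₄ : ℝ, ∀ δ : ℝ, 0 < δ → ∃ T₀ : ℝ, ∀ Rt : ℝ, T₀ ≤ Rt →
      ∀ ψ ∈ Set.Icc (0 : ℝ) (Real.pi / 2), ∀ η ∈ Set.Icc (0 : ℝ) (Real.pi / 2),
        let u := (Real.sqrt 2 * M / (1 + k)) ^ ((1 : ℝ) / 4) * Real.sqrt Rt * Real.cos ψ
        let v := (Real.sqrt 2 * M / (1 - k)) ^ ((1 : ℝ) / 4) * Real.sqrt Rt * Real.sin ψ
        let R := Sdist M k η u v
        GeodRel k η u v →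
          R + C₁ * Real.log R + C₂ ≤ Rt ∧ Rt ≤ (1 + δ) * R + C₃ * Real.log R + C₄ := by
  refine ⟨-almostSphereLogCoeff M k, -almostSphereConst M k, 0, 0,
    fun δ hδ => ⟨1, fun Rt hRt ψ hψ η hη => ?_⟩⟩
  intro u v R hrel
  obtain ⟨hu, hv, huv⟩ := almostSphere_coords hM hk (by linarith) hψ rfl rfl
  obtain ⟨hlo, hhi⟩ := Sdist_bounds_of_geodRel hM hk hη hu hv hRt huv hrel
  have hlog : log Rt ≤ log R := log_le_log (by linarith) hlo
  have := mul_le_mul_of_nonneg_left hlog (almostSphereLogCoeff_nonneg M k)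
  have := mul_nonneg hδ.le (by linarith : 0 ≤ R)
  constructor <;> linarith
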